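/- arXiv:1509.01840 — 2 statements merged into one kernel-verified Lean document; each statement's English description precedes it below -/
import Mathlib

section
/- For each integer k ≥ 1, ∫_{1/(k+1)}^1 ∫_{(1-x)/(k+1)}^{(1-x)/k} 12/(π² x(1+y)) dy dx + ∫_{1/(k+2)}^{1/(k+1)} ∫_{(1-x)/(k+1)}^{x} 12/(π² x(1+y)) dy dx = (6/π²)[Li₂(1/(k+1)²) − Li₂(1/(k+2)²) + 4 log²(k+1) − 2 log²((k+2)/(k+1)) − 2 log(k(k+2)) log(k+1)]. -/
/-!
Integrating in `y` first turns each piece into `∫ (12/π²) x⁻¹ log(ratio of two affine functions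
of x) dx`. Every affine function occurring factors as `α (1 - x/γ)`, and
`log (α (1 - x/γ)) / x` has the primitive `log α · log x - Li₂ (x/γ)` since
`Li₂'(z) = -log (1 - z) / z`. The dilogarithms left over, at `±1/(k+1)` and `±1/(k+2)`, collapse
through `Li₂ z + Li₂ (-z) = Li₂ (z²) / 2`.
-/

open Real

/-- The dilogarithm Li₂(z) = ∑_{n≥1} zⁿ/n². -/
noncomputable def Li2 (z : ℝ) : ℝ := ∑' n : ℕ, z ^ (n + 1) / (n + 1) ^ 2

lemma summable_li2 {z : ℝ} (hz : |z| ≤ 1) :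
    Summable fun n : ℕ => z ^ (n + 1) / ((n : ℝ) + 1) ^ 2 := by
  have hbound : Summable fun n : ℕ => 1 / ((n : ℝ) + 1) ^ 2 := by
    exact_mod_cast (summable_nat_add_iff 1).2 (Real.summable_one_div_nat_pow.2 one_lt_two)
  refine .of_norm_bounded hbound fun n => ?_
  rw [norm_div, norm_pow, Real.norm_eq_abs, Real.norm_of_nonneg (by positivity)]
  gcongr
  exact pow_le_one₀ (abs_nonneg z) hz

lemma hasDerivAt_li2 {z : ℝ} (hz : |z| < 1) (hz0 : z ≠ 0) :
    HasDerivAt Li2 (-log (1 - z) / z) z := by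
  obtain ⟨r, hzr, hr1⟩ := exists_between hz
  have hr0 : 0 < r := (abs_nonneg z).trans_lt hzr
  have hderiv : HasDerivAt Li2 (∑' n : ℕ, z ^ n / ((n : ℝ) + 1)) z := by
    refine hasDerivAt_tsum_of_isPreconnected (u := fun n : ℕ => r ^ n) (t := Set.Ioo (-r) r)
      (g := fun n y => y ^ (n + 1) / ((n : ℝ) + 1) ^ 2) (g' := fun n y => y ^ n / ((n : ℝ) + 1))
      (y₀ := 0) (summable_geometric_of_lt_one hr0.le hr1) isOpen_Ioo
      (convex_Ioo (-r) r).isPreconnected (fun n y _ => ?_) (fun n y hy => ?_)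
      ⟨by linarith, hr0⟩ (by simp) (abs_lt.1 hzr)
    · refine ((hasDerivAt_pow (n + 1) y).div_const (((n : ℝ) + 1) ^ 2)).congr_deriv ?_
      push_cast
      field_simp
    · rw [norm_div, norm_pow, Real.norm_eq_abs, Real.norm_of_nonneg (by positivity)]
      calc |y| ^ n / ((n : ℝ) + 1) ≤ |y| ^ n := div_le_self (by positivity) (by simp)
        _ ≤ r ^ n := pow_le_pow_left₀ (abs_nonneg y) (abs_lt.2 hy).le n
  have hlog : HasSum (fun n : ℕ => z ^ n / ((n : ℝ) + 1)) (-log (1 - z) / z) := by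
    refine ((Real.hasSum_pow_div_log_of_abs_lt_one hz).div_const z).congr_fun fun n => ?_
    field_simp
    ring
  rwa [hlog.tsum_eq] at hderiv

lemma li2_add_li2_neg {z : ℝ} (hz : |z| ≤ 1) : Li2 z + Li2 (-z) = Li2 (z ^ 2) / 2 := by
  have hz2 : |z ^ 2| ≤ 1 := by rw [abs_pow]; exact pow_le_one₀ (abs_nonneg z) hz
  have hsum := (summable_li2 hz).hasSum.add (summable_li2 (z := -z) (by rwa [abs_neg])).hasSum
  have hsum' : HasSum (fun n : ℕ => z ^ (n + 1) / ((n : ℝ) + 1) ^ 2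
      + (-z) ^ (n + 1) / ((n : ℝ) + 1) ^ 2) (0 + Li2 (z ^ 2) / 2) := by
    refine HasSum.even_add_odd ?_ ?_
    · convert hasSum_zero with n
      rw [Odd.neg_pow ⟨n, rfl⟩]
      ring
    · refine ((summable_li2 hz2).hasSum.div_const 2).congr_fun fun n => ?_
      rw [Even.neg_pow ⟨n + 1, by ring⟩, show 2 * n + 1 + 1 = 2 * (n + 1) by ring, pow_mul]
      push_cast
      field_simp
      ring
  rw [zero_add] at hsum'
  exact hsum.unique hsum'

lemma hasDerivAt_li2_div {γ x : ℝ} (hx : x ≠ 0) (hγ : γ ≠ 0) (hxγ : |x / γ| < 1) :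
    HasDerivAt (fun t => Li2 (t / γ)) (-log (1 - x / γ) / x) x := by
  refine ((hasDerivAt_li2 hxγ (div_ne_zero hx hγ)).comp x
    ((hasDerivAt_id x).div_const γ)).congr_deriv ?_
  field_simp

lemma hasDerivAt_log_mul_log_sub_li2_div {α γ x : ℝ} (hα : α ≠ 0) (hx : x ≠ 0) (hγ : γ ≠ 0)
    (hxγ : |x / γ| < 1) :
    HasDerivAt (fun t => log α * log t - Li2 (t / γ)) (log (α * (1 - x / γ)) / x) x := by
  have hpos : 0 < 1 - x / γ := by linarith [le_abs_self (x / γ)]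
  refine (((hasDerivAt_log hx).const_mul (log α)).sub
    (hasDerivAt_li2_div hx hγ hxγ)).congr_deriv ?_
  rw [log_mul hα hpos.ne']
  field_simp
  ring

section LogOverX

variable {α γ a b : ℝ}

lemma pos_and_abs_div_lt_one_of_mem_uIcc (ha : 0 < a) (hb : 0 < b) (haγ : a < |γ|) (hbγ : b < |γ|)
    {x : ℝ} (hx : x ∈ Set.uIcc a b) : 0 < x ∧ |x / γ| < 1 := by
  have hx0 : 0 < x := lt_of_lt_of_le (lt_min ha hb) hx.1
  refine ⟨hx0, ?_⟩
  rw [abs_div, abs_of_pos hx0, div_lt_one (ha.trans haγ)]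
  exact hx.2.trans_lt (max_lt haγ hbγ)

lemma intervalIntegrable_log_mul_one_sub_div_div (hα : α ≠ 0) (ha : 0 < a) (hb : 0 < b)
    (haγ : a < |γ|) (hbγ : b < |γ|) :
    IntervalIntegrable (fun x => log (α * (1 - x / γ)) / x) MeasureTheory.volume a b := by
  refine ContinuousOn.intervalIntegrable fun x hx => ?_
  obtain ⟨hx0, hxγ⟩ := pos_and_abs_div_lt_one_of_mem_uIcc ha hb haγ hbγ hx
  have hpos : 0 < 1 - x / γ := by linarith [le_abs_self (x / γ)]
  have hlog : ContinuousAt (fun x => log (α * (1 - x / γ))) x :=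
    (by fun_prop : ContinuousAt (fun x => α * (1 - x / γ)) x).log (mul_ne_zero hα hpos.ne')
  exact (hlog.div continuousAt_id hx0.ne').continuousWithinAt

lemma integral_log_mul_one_sub_div_div (hα : α ≠ 0) (ha : 0 < a) (hb : 0 < b)
    (haγ : a < |γ|) (hbγ : b < |γ|) :
    ∫ x in a..b, log (α * (1 - x / γ)) / x
      = (log α * log b - Li2 (b / γ)) - (log α * log a - Li2 (a / γ)) := by
  have hγ : γ ≠ 0 := abs_pos.1 (ha.trans haγ)
  refine intervalIntegral.integral_eq_sub_of_hasDerivAt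
    (f := fun t => log α * log t - Li2 (t / γ)) (fun x hx => ?_)
    (intervalIntegrable_log_mul_one_sub_div_div hα ha hb haγ hbγ)
  obtain ⟨hx0, hxγ⟩ := pos_and_abs_div_lt_one_of_mem_uIcc ha hb haγ hbγ hx
  exact hasDerivAt_log_mul_log_sub_li2_div hα hx0.ne' hγ hxγ

end LogOverX

lemma integral_div_mul_one_add (c d : ℝ) {p q : ℝ} (hp : -1 < p) (hq : -1 < q) :
    ∫ y in p..q, c / (d * (1 + y)) = c / d * log ((1 + q) / (1 + p)) := by
  simp_rw [← div_div, div_eq_mul_inv (c / d)]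
  rw [intervalIntegral.integral_const_mul, intervalIntegral.integral_comp_add_left (·⁻¹),
    integral_inv_of_pos (by linarith) (by linarith)]

lemma integral_subtriangle_right {a : ℝ} (ha : 0 < a) :
    ∫ x in (1 / (a + 1))..1, ∫ y in ((1 - x) / (a + 1))..((1 - x) / a),
        12 / (π ^ 2 * x * (1 + y))
      = 12 / π ^ 2 * ((log ((a + 1) / a) - log ((a + 2) / (a + 1))) * log (a + 1)
        + Li2 (1 / (a + 1) ^ 2) - Li2 (1 / (a + 1)) - Li2 (1 / (a + 1) / (a + 2))
        + Li2 (1 / (a + 2))) := by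
  have hle : 1 / (a + 1) ≤ 1 := by rw [div_le_one (by positivity)]; linarith
  have hinner : Set.EqOn
      (fun x => ∫ y in ((1 - x) / (a + 1))..((1 - x) / a), 12 / (π ^ 2 * x * (1 + y)))
      (fun x => 12 / π ^ 2 * (log ((a + 1) / a * (1 - x / (a + 1))) / x
        - log ((a + 2) / (a + 1) * (1 - x / (a + 2))) / x))
      (Set.uIcc (1 / (a + 1)) 1) := by
    intro x hx
    rw [Set.uIcc_of_le hle] at hx
    have hx0 : 0 < x := lt_of_lt_of_le (by positivity) hx.1
    have hx1 : 0 ≤ 1 - x := by linarith [hx.2]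
    have e1 : 1 + (1 - x) / a = (a + 1) / a * (1 - x / (a + 1)) := by field_simp; ring
    have e2 : 1 + (1 - x) / (a + 1) = (a + 2) / (a + 1) * (1 - x / (a + 2)) := by
      field_simp; ring
    have hp : 0 < 1 + (1 - x) / (a + 1) := by positivity
    have hq : 0 < 1 + (1 - x) / a := by positivity
    dsimp only
    rw [integral_div_mul_one_add _ _ (by linarith) (by linarith), log_div hq.ne' hp.ne', e1, e2]
    ring
  have hγ₁ : 1 / (a + 1) < |a + 1| := by
    rw [abs_of_pos (by positivity), div_lt_iff₀ (by positivity)]; nlinarith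
  have hγ₂ : 1 / (a + 1) < |a + 2| := by
    rw [abs_of_pos (by positivity), div_lt_iff₀ (by positivity)]; nlinarith
  have h1γ₁ : (1 : ℝ) < |a + 1| := by rw [abs_of_pos (by positivity)]; linarith
  have h1γ₂ : (1 : ℝ) < |a + 2| := by rw [abs_of_pos (by positivity)]; linarith
  rw [intervalIntegral.integral_congr hinner, intervalIntegral.integral_const_mul,
    intervalIntegral.integral_sub
      (intervalIntegrable_log_mul_one_sub_div_div (by positivity) (by positivity) one_pos hγ₁ h1γ₁)
      (intervalIntegrable_log_mul_one_sub_div_div (by positivity) (by positivity) one_pos hγ₂ h1γ₂),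
    integral_log_mul_one_sub_div_div (by positivity) (by positivity) one_pos hγ₁ h1γ₁,
    integral_log_mul_one_sub_div_div (by positivity) (by positivity) one_pos hγ₂ h1γ₂,
    show 1 / (a + 1) / (a + 1) = 1 / (a + 1) ^ 2 by rw [div_div, sq], log_one,
    show log (1 / (a + 1)) = -log (a + 1) by rw [one_div, log_inv]]
  ring

lemma integral_subtriangle_left {a : ℝ} (ha : 0 < a) :
    ∫ x in (1 / (a + 2))..(1 / (a + 1)), ∫ y in ((1 - x) / (a + 1))..x,
        12 / (π ^ 2 * x * (1 + y))
      = 12 / π ^ 2 * (Li2 (-(1 / (a + 2))) - Li2 (-(1 / (a + 1)))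
        - log ((a + 2) / (a + 1)) ^ 2 + Li2 (1 / (a + 1) / (a + 2)) - Li2 (1 / (a + 2) ^ 2)) := by
  have hle : 1 / (a + 2) ≤ 1 / (a + 1) := one_div_le_one_div_of_le (by positivity) (by linarith)
  have hlt : 1 / (a + 1) < 1 := by rw [div_lt_one (by positivity)]; linarith
  have hinner : Set.EqOn
      (fun x => ∫ y in ((1 - x) / (a + 1))..x, 12 / (π ^ 2 * x * (1 + y)))
      (fun x => 12 / π ^ 2 * (log (1 * (1 - x / -1)) / x
        - log ((a + 2) / (a + 1) * (1 - x / (a + 2))) / x))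
      (Set.uIcc (1 / (a + 2)) (1 / (a + 1))) := by
    intro x hx
    rw [Set.uIcc_of_le hle] at hx
    have hx0 : 0 < x := lt_of_lt_of_le (by positivity) hx.1
    have hx1 : 0 ≤ 1 - x := by linarith [hx.2]
    have e1 : 1 + x = 1 * (1 - x / -1) := by ring
    have e2 : 1 + (1 - x) / (a + 1) = (a + 2) / (a + 1) * (1 - x / (a + 2)) := by
      field_simp; ring
    have hp : 0 < 1 + (1 - x) / (a + 1) := by positivity
    dsimp only
    -- `log (1 + x)` in the shape `log (α * (1 - x / γ))`, with `α = 1` and `γ = -1`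
    rw [integral_div_mul_one_add _ _ (by linarith) (by linarith), log_div (by linarith) hp.ne',
      e1, e2]
    ring
  have h1 : ∀ b : ℝ, b < 1 → b < |(-1 : ℝ)| := fun b hb => by rwa [abs_neg, abs_one]
  have hγ₂ : ∀ b, 0 < b → b < 1 → b < |a + 2| := fun b _ hb => by
    rw [abs_of_pos (by positivity)]; linarith
  have hb₁ : 0 < 1 / (a + 1) := by positivity
  have hb₂ : 0 < 1 / (a + 2) := by positivity
  have hb₂₁ : 1 / (a + 2) < 1 := hle.trans_lt hlt
  rw [intervalIntegral.integral_congr hinner, intervalIntegral.integral_const_mul,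
    intervalIntegral.integral_sub
      (intervalIntegrable_log_mul_one_sub_div_div one_ne_zero hb₂ hb₁ (h1 _ hb₂₁) (h1 _ hlt))
      (intervalIntegrable_log_mul_one_sub_div_div (by positivity) hb₂ hb₁
        (hγ₂ _ hb₂ hb₂₁) (hγ₂ _ hb₁ hlt)),
    integral_log_mul_one_sub_div_div one_ne_zero hb₂ hb₁ (h1 _ hb₂₁) (h1 _ hlt),
    integral_log_mul_one_sub_div_div (by positivity) hb₂ hb₁ (hγ₂ _ hb₂ hb₂₁) (hγ₂ _ hb₁ hlt),
    show 1 / (a + 2) / (a + 2) = 1 / (a + 2) ^ 2 by rw [div_div, sq], log_one,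
    show log (1 / (a + 1)) = -log (a + 1) by rw [one_div, log_inv],
    show log (1 / (a + 2)) = -log (a + 2) by rw [one_div, log_inv],
    log_div (by positivity) (by positivity)]
  simp only [div_neg, div_one]
  ring

theorem stmt10 (k : ℕ) (hk : 1 ≤ k) :
    (∫ x in (1 / (k + 1 : ℝ))..1,
        ∫ y in ((1 - x) / (k + 1))..((1 - x) / k), 12 / (π ^ 2 * x * (1 + y)))
    + (∫ x in (1 / (k + 2 : ℝ))..(1 / (k + 1 : ℝ)),
        ∫ y in ((1 - x) / (k + 1))..x, 12 / (π ^ 2 * x * (1 + y)))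
    = (6 / π ^ 2) *
        (Li2 (1 / (k + 1 : ℝ) ^ 2) - Li2 (1 / (k + 2 : ℝ) ^ 2)
          + 4 * (Real.log (k + 1)) ^ 2
          - 2 * (Real.log ((k + 2 : ℝ) / (k + 1))) ^ 2
          - 2 * Real.log (k * (k + 2 : ℝ)) * Real.log (k + 1)) := by
  have hk₀ : (0 : ℝ) < k := by exact_mod_cast hk
  have hdup (c : ℝ) (hc : 1 ≤ c) : Li2 (1 / c) + Li2 (-(1 / c)) = Li2 (1 / c ^ 2) / 2 := by
    have hc' : |1 / c| ≤ 1 := by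
      rw [abs_of_pos (by positivity)]
      exact div_le_one_of_le₀ hc (by linarith)
    rw [li2_add_li2_neg hc', div_pow, one_pow]
  have hu := hdup (k + 1) (by linarith)
  have hv := hdup (k + 2) (by linarith)
  rw [integral_subtriangle_right hk₀, integral_subtriangle_left hk₀,
    log_div (by positivity) hk₀.ne', log_div (by positivity) (by positivity),
    log_mul hk₀.ne' (by positivity)]
  linear_combination (-12 / π ^ 2) * hu + (12 / π ^ 2) * hv
end

section
/- For every integer n ≥ 0 and (x,y) ∈ Δ, E_n(x,y) := (1/x²) ∫_0^∞ e^{-t(1-x+y)/x} L_n¹(t) · (t/(e^t−1)) dt = (n+1) ∑_{m=0}^∞ (1+y+(m−1)x)ⁿ/(1+y+mx)^{n+2}. -/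
/-!
Writing `s = (1 - x + y) / x`, the integrand is `t L_n¹(t) e^{-st} / (e^t - 1)`. Expanding
`1 / (e^t - 1) = ∑ₘ e^{-(m+1)t}` splits the integral into Laplace transforms of `t L_n¹(t)` at
`σ = s + m + 1`; the interchange is justified by Tonelli, since `t / (e^t - 1) ≤ 1` makes the
integrand absolutely integrable. Termwise integration of the monomials `tⁱ⁺¹ e^{-σt}` and the
identity `(i + 1) C(n + 1, i + 1) = (n + 1) C(n, i)` reduce the transform to the binomial expansion
of `(n + 1) (1 - 1/σ)ⁿ / σ²`, and `σ = (1 + y + m x) / x` turns this into the stated series.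
-/

open Real MeasureTheory

/-- The generalized Laguerre polynomial of order 1:
L_n¹(t) = ∑_{i=0}^n (−1)^i C(n+1, n−i) tⁱ/i!. -/
noncomputable def laguerre1 (n : ℕ) (t : ℝ) : ℝ :=
  ∑ i ∈ Finset.range (n + 1),
    (-1) ^ i * (Nat.choose (n + 1) (n - i) : ℝ) * t ^ i / (Nat.factorial i : ℝ)

open Set Finset
open scoped Nat

lemma integral_pow_mul_exp_neg_mul_Ioi (k : ℕ) {σ : ℝ} (hσ : 0 < σ) :
    ∫ t in Ioi (0 : ℝ), t ^ k * exp (-(σ * t)) = k ! / σ ^ (k + 1) := by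
  have key := integral_rpow_mul_exp_neg_mul_Ioi (a := k + 1) (by positivity) hσ
  rw [add_sub_cancel_right] at key
  simp_rw [rpow_natCast, Gamma_nat_eq_factorial] at key
  rw [key, ← Nat.cast_succ, rpow_natCast, one_div_pow, one_div_mul_eq_div]

lemma integrableOn_pow_mul_exp_neg_mul_Ioi (k : ℕ) {σ : ℝ} (hσ : 0 < σ) :
    IntegrableOn (fun t ↦ t ^ k * exp (-(σ * t))) (Ioi 0) :=
  .of_integral_ne_zero (by rw [integral_pow_mul_exp_neg_mul_Ioi k hσ]; positivity)

lemma pow_mul_laguerre1_mul_exp_eq_sum (n j : ℕ) (σ t : ℝ) :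
    t ^ j * laguerre1 n t * exp (-(σ * t)) =
      ∑ i ∈ range (n + 1), (-1) ^ i * ((n + 1).choose (n - i) : ℝ) / i ! *
        (t ^ (i + j) * exp (-(σ * t))) := by
  simp only [laguerre1, mul_sum, sum_mul]
  refine sum_congr rfl fun i _ ↦ ?_
  ring

lemma integrableOn_pow_mul_laguerre1_mul_exp_neg_mul_Ioi (n j : ℕ) {σ : ℝ} (hσ : 0 < σ) :
    IntegrableOn (fun t ↦ t ^ j * laguerre1 n t * exp (-(σ * t))) (Ioi 0) := by
  simp_rw [pow_mul_laguerre1_mul_exp_eq_sum]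
  exact integrable_finsetSum _ fun i _ ↦
    (integrableOn_pow_mul_exp_neg_mul_Ioi (i + j) hσ).const_mul _

lemma sum_neg_one_pow_mul_choose_mul_div_pow (n : ℕ) {σ : ℝ} (hσ : σ ≠ 0) :
    ∑ i ∈ range (n + 1), (-1) ^ i * ((n + 1).choose (n - i) : ℝ) * (i + 1) / σ ^ (i + 2) =
      (n + 1) * (σ - 1) ^ n / σ ^ (n + 2) := by
  have hchoose : ∀ i ∈ range (n + 1),
      ((n + 1).choose (n - i) : ℝ) * (i + 1) = (n + 1) * n.choose i := by
    intro i hi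
    have hi : i ≤ n := Nat.lt_succ_iff.mp (mem_range.mp hi)
    rw [Nat.choose_symm_of_eq_add (by omega : n + 1 = (n - i) + (i + 1))]
    exact_mod_cast (Nat.add_one_mul_choose_eq n i).symm
  calc ∑ i ∈ range (n + 1), (-1) ^ i * ((n + 1).choose (n - i) : ℝ) * (i + 1) / σ ^ (i + 2)
      = (n + 1) / σ ^ 2 * ∑ i ∈ range (n + 1), (-1 / σ) ^ i * 1 ^ (n - i) * n.choose i := by
        rw [mul_sum]
        refine sum_congr rfl fun i hi ↦ ?_
        rw [mul_assoc, hchoose i hi, div_pow]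
        field_simp
        ring
    _ = (n + 1) * (σ - 1) ^ n / σ ^ (n + 2) := by
        rw [← add_pow, show -1 / σ + 1 = (σ - 1) / σ by field_simp; ring, div_pow]
        field_simp
        ring

lemma integral_mul_laguerre1_mul_exp_neg_mul_Ioi (n : ℕ) {σ : ℝ} (hσ : 0 < σ) :
    ∫ t in Ioi (0 : ℝ), t * laguerre1 n t * exp (-(σ * t)) =
      (n + 1) * (σ - 1) ^ n / σ ^ (n + 2) := by
  calc ∫ t in Ioi (0 : ℝ), t * laguerre1 n t * exp (-(σ * t))
      = ∫ t in Ioi (0 : ℝ), ∑ i ∈ range (n + 1), (-1) ^ i * ((n + 1).choose (n - i) : ℝ) / i ! *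
          (t ^ (i + 1) * exp (-(σ * t))) := by
        simp_rw [← pow_mul_laguerre1_mul_exp_eq_sum, pow_one]
    _ = ∑ i ∈ range (n + 1), (-1) ^ i * ((n + 1).choose (n - i) : ℝ) / i ! *
          ((i + 1)! / σ ^ (i + 2)) := by
        rw [integral_finsetSum _ fun i _ ↦
          (integrableOn_pow_mul_exp_neg_mul_Ioi (i + 1) hσ).const_mul _]
        simp_rw [integral_const_mul, integral_pow_mul_exp_neg_mul_Ioi _ hσ]
    _ = (n + 1) * (σ - 1) ^ n / σ ^ (n + 2) := by
        rw [← sum_neg_one_pow_mul_choose_mul_div_pow n hσ.ne']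
        refine sum_congr rfl fun i _ ↦ ?_
        rw [Nat.factorial_succ]
        push_cast
        field_simp

lemma exp_sub_one_pos {t : ℝ} (ht : 0 < t) : 0 < exp t - 1 :=
  sub_pos.mpr (one_lt_exp_iff.mpr ht)

lemma hasSum_exp_neg_mul_succ {t : ℝ} (ht : 0 < t) :
    HasSum (fun m : ℕ ↦ exp (-((m + 1) * t))) (exp t - 1)⁻¹ := by
  have hq : exp (-t) < 1 := exp_lt_one_iff.mpr (neg_neg_of_pos ht)
  have hterm : (fun m : ℕ ↦ exp (-((m + 1) * t))) = fun m ↦ exp (-t) * exp (-t) ^ m := by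
    ext m
    rw [← exp_nat_mul, ← exp_add]
    ring_nf
  have hsum : exp (-t) * (1 - exp (-t))⁻¹ = (exp t - 1)⁻¹ := by
    have := (exp_sub_one_pos ht).ne'
    rw [exp_neg]
    field_simp
  rw [hterm, ← hsum]
  exact (hasSum_geometric_of_lt_one (exp_pos _).le hq).mul_left _

lemma integral_div_exp_sub_one_Ioi_eq_tsum {f : ℝ → ℝ}
    (hf : IntegrableOn (fun t ↦ f t / (exp t - 1)) (Ioi 0)) :
    ∫ t in Ioi (0 : ℝ), f t / (exp t - 1) =
      ∑' m : ℕ, ∫ t in Ioi (0 : ℝ), f t * exp (-((m + 1) * t)) := by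
  have hsum : ∀ t ∈ Ioi (0 : ℝ),
      HasSum (fun m : ℕ ↦ f t * exp (-((m + 1) * t))) (f t / (exp t - 1)) :=
    fun t ht ↦ (hasSum_exp_neg_mul_succ ht).mul_left (f t)
  have hmeas : ∀ m : ℕ, AEStronglyMeasurable (fun t ↦ f t * exp (-((m + 1) * t)))
      (volume.restrict (Ioi 0)) := by
    intro m
    refine (hf.aestronglyMeasurable.mul (by fun_prop : Continuous fun t ↦
      (exp t - 1) * exp (-((m + 1) * t))).aestronglyMeasurable).congr ?_
    filter_upwards [ae_restrict_mem measurableSet_Ioi] with t ht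
    have := (exp_sub_one_pos ht).ne'
    simp only [Pi.mul_apply]
    field_simp
  have hfinite : ∑' m : ℕ, ∫⁻ t in Ioi 0, ‖f t * exp (-((m + 1) * t))‖ₑ ≠ ⊤ := by
    rw [← lintegral_tsum fun m ↦ (hmeas m).enorm]
    refine ne_of_lt (lt_of_eq_of_lt (setLIntegral_congr_fun measurableSet_Ioi fun t ht ↦ ?_) hf.2)
    have hexp := hasSum_exp_neg_mul_succ ht
    simp_rw [enorm_mul, ENNReal.tsum_mul_left, div_eq_mul_inv, enorm_mul,
      enorm_of_nonneg (exp_pos _).le, ← hexp.tsum_eq,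
      enorm_of_nonneg (tsum_nonneg fun m ↦ (exp_pos _).le),
      ENNReal.ofReal_tsum_of_nonneg (fun m ↦ (exp_pos _).le) hexp.summable]
  rw [← integral_tsum hmeas hfinite]
  exact setIntegral_congr_fun measurableSet_Ioi fun t ht ↦ (hsum t ht).tsum_eq.symm

lemma integrableOn_mul_div_exp_sub_one_Ioi {g : ℝ → ℝ} (hg : IntegrableOn g (Ioi 0)) :
    IntegrableOn (fun t ↦ t * g t / (exp t - 1)) (Ioi 0) := by
  have hmeas : AEStronglyMeasurable (fun t : ℝ ↦ t / (exp t - 1)) (volume.restrict (Ioi 0)) :=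
    ContinuousOn.aestronglyMeasurable (fun t ht ↦ by
      have := (exp_sub_one_pos ht).ne'
      fun_prop (disch := assumption)) measurableSet_Ioi
  have hbound : ∀ᵐ t ∂(volume.restrict (Ioi 0)), ‖t / (exp t - 1)‖ ≤ 1 := by
    filter_upwards [ae_restrict_mem measurableSet_Ioi] with t ht
    have hpos := exp_sub_one_pos ht
    rw [norm_div, Real.norm_of_nonneg (le_of_lt ht), Real.norm_of_nonneg hpos.le,
      div_le_one hpos]
    linarith [add_one_le_exp t]
  exact (hg.bdd_mul hmeas hbound).congr (ae_of_all _ fun t ↦ by ring)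

theorem stmt15 (n : ℕ) (x y : ℝ) (h1 : 0 < y) (h2 : y < x) (h3 : x < 1) :
    (1 / x ^ 2) *
        ∫ t in Set.Ioi (0:ℝ),
          Real.exp (-t * (1 - x + y) / x) * laguerre1 n t * (t / (Real.exp t - 1))
      = (n + 1) * ∑' m : ℕ, (1 + y + ((m : ℝ) - 1) * x) ^ n / (1 + y + m * x) ^ (n + 2) := by
  have hx : 0 < x := h1.trans h2
  set s := (1 - x + y) / x with hs_def
  have hs : 0 < s := div_pos (by linarith) hx
  have hintegrand : ∀ t, exp (-t * (1 - x + y) / x) * laguerre1 n t * (t / (exp t - 1)) =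
      t * (laguerre1 n t * exp (-(s * t))) / (exp t - 1) := fun t ↦ by
    rw [show -t * (1 - x + y) / x = -(s * t) by ring]
    ring
  have hterm : ∀ m : ℕ,
      ∫ t in Ioi (0 : ℝ), t * (laguerre1 n t * exp (-(s * t))) * exp (-((m + 1) * t)) =
        (n + 1) * (s + m) ^ n / (s + m + 1) ^ (n + 2) := fun m ↦ by
    have hexp : ∀ t, t * (laguerre1 n t * exp (-(s * t))) * exp (-((m + 1) * t)) =
        t * laguerre1 n t * exp (-((s + m + 1) * t)) := fun t ↦ by
      rw [mul_assoc, mul_assoc, ← exp_add]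
      ring_nf
    simp_rw [hexp]
    rw [integral_mul_laguerre1_mul_exp_neg_mul_Ioi n (by positivity), add_sub_cancel_right]
  have hint : IntegrableOn (fun t ↦ laguerre1 n t * exp (-(s * t))) (Ioi 0) := by
    simpa using integrableOn_pow_mul_laguerre1_mul_exp_neg_mul_Ioi n 0 hs
  simp_rw [hintegrand]
  rw [integral_div_exp_sub_one_Ioi_eq_tsum (integrableOn_mul_div_exp_sub_one_Ioi hint), ← tsum_mul_left,
    ← tsum_mul_left]
  refine tsum_congr fun m ↦ ?_
  rw [hterm, show s + m + 1 = (1 + y + m * x) / x by rw [hs_def]; field_simp; ring,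
    show s + m = (1 + y + (m - 1) * x) / x by rw [hs_def]; field_simp; ring, div_pow, div_pow]
  field_simp
  ring
end
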